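/- Let E be a group given by the presentation ⟨Y, U, A, B, Σ ∣ Σ central, YUY = UYU·Σ^{k₀}, (YUY)⁴ = Σ^{k₁}, AB = BA·Σ^{k₂}, BU = UBA⁻¹·Σ^{k₃}, AY = YAB·Σ^{k₄}, AU = UA·Σ^{k₅}, BY = YB·Σ^{k₆}⟩ with k₀ = k₃ = k₄ = 0. Then the relations force k₅ = k₆ = 0; in particular, in any such group the identities B·YUY = YUY·A⁻¹·Σ^{2k₆} and B·UYU = UYU·A⁻¹·Σ^{k₆−k₅} hold, and comparing via YUY = UYU yields 2k₆ = k₆ − k₅ and (using A in place of B) k₆ = k₅, hence k₅ = k₆ = 0. -/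
import Mathlib


private lemma rw3 {G : Type*} [Group G] {a b c d e : G} (h : a * b = c * d * e) :
    ∀ t : G, a * (b * t) = c * (d * (e * t)) := by
  intro t
  calc a * (b * t) = a * b * t := by group
    _ = (c * d * e) * t := by rw [h]
    _ = c * (d * (e * t)) := by group

private lemma rw2 {G : Type*} [Group G] {a b c d : G} (h : a * b = c * d) :
    ∀ t : G, a * (b * t) = c * (d * t) := by
  intro t
  calc a * (b * t) = a * b * t := by group
    _ = (c * d) * t := by rw [h]
    _ = c * (d * t) := by group


/-- Let `E` be a group generated by `Y, U, A, B` and a central element `Σ` of infinite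
order, subject to the relations (with `k₀ = k₃ = k₄ = 0`): `YUY = UYU`,
`(YUY)⁴ = Σ^{k₁}`, `AB = BA·Σ^{k₂}`, `BU = UBA⁻¹`, `AY = YAB`, `AU = UA·Σ^{k₅}`,
`BY = YB·Σ^{k₆}`.  Then `B·YUY = YUY·A⁻¹·Σ^{2k₆}` and `B·UYU = UYU·A⁻¹·Σ^{k₆−k₅}`,
and the relations force `k₅ = k₆ = 0`. -/
theorem central_extension_forces_k5_k6_zero {E : Type*} [Group E]
    (Y U A B S : E) (k₁ k₂ k₅ k₆ : ℤ)
    (hSY : S * Y = Y * S) (hSU : S * U = U * S)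
    (hSA : S * A = A * S) (hSB : S * B = B * S)
    (hSord : ∀ n : ℤ, S ^ n = 1 → n = 0)
    (h0 : Y * U * Y = U * Y * U)
    (h1 : (Y * U * Y) ^ 4 = S ^ k₁)
    (h2 : A * B = B * A * S ^ k₂)
    (h3 : B * U = U * B * A⁻¹)
    (h4 : A * Y = Y * A * B)
    (h5 : A * U = U * A * S ^ k₅)
    (h6 : B * Y = Y * B * S ^ k₆) :
    B * (Y * U * Y) = (Y * U * Y) * A⁻¹ * S ^ (2 * k₆) ∧
    B * (U * Y * U) = (U * Y * U) * A⁻¹ * S ^ (k₆ - k₅) ∧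
    k₅ = 0 ∧ k₆ = 0 := by
  -- commutation of powers of S with generators and inverses
  have cSY : Commute S Y := hSY
  have cSU : Commute S U := hSU
  have cSA : Commute S A := hSA
  have cSB : Commute S B := hSB
  have sY : ∀ n : ℤ, S ^ n * Y = Y * S ^ n := fun n => (cSY.zpow_left n).eq
  have sU : ∀ n : ℤ, S ^ n * U = U * S ^ n := fun n => (cSU.zpow_left n).eq
  have sA : ∀ n : ℤ, S ^ n * A = A * S ^ n := fun n => (cSA.zpow_left n).eq
  have sB : ∀ n : ℤ, S ^ n * B = B * S ^ n := fun n => (cSB.zpow_left n).eq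
  have sA' : ∀ n : ℤ, S ^ n * A⁻¹ = A⁻¹ * S ^ n := fun n => ((cSA.inv_right).zpow_left n).eq
  have sB' : ∀ n : ℤ, S ^ n * B⁻¹ = B⁻¹ * S ^ n := fun n => ((cSB.inv_right).zpow_left n).eq
  have sYt := fun n : ℤ => rw2 (sY n)
  have sUt := fun n : ℤ => rw2 (sU n)
  have sAt := fun n : ℤ => rw2 (sA n)
  have sBt := fun n : ℤ => rw2 (sB n)
  have sA't := fun n : ℤ => rw2 (sA' n)
  have sB't := fun n : ℤ => rw2 (sB' n)
  have sS0 : ∀ a b : ℤ, S ^ a * S ^ b = S ^ (a + b) := fun a b => (zpow_add S a b).symm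
  have sSt : ∀ (a b : ℤ) (t : E), S ^ a * (S ^ b * t) = S ^ (a + b) * t := by
    intro a b t; rw [← mul_assoc, sS0]
  -- derived relations
  have bA'Y : A⁻¹ * Y = Y * (B⁻¹ * A⁻¹) := by
    calc A⁻¹ * Y = A⁻¹ * (Y * A * B) * (B⁻¹ * A⁻¹) := by group
      _ = A⁻¹ * (A * Y) * (B⁻¹ * A⁻¹) := by rw [← h4]
      _ = Y * (B⁻¹ * A⁻¹) := by group
  have bB'U : B⁻¹ * U = U * (A * B⁻¹) := by
    calc B⁻¹ * U = B⁻¹ * (U * B * A⁻¹) * (A * B⁻¹) := by group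
      _ = B⁻¹ * (B * U) * (A * B⁻¹) := by rw [← h3]
      _ = U * (A * B⁻¹) := by group
  have bA'U : A⁻¹ * U = U * (A⁻¹ * S ^ (-k₅)) := by
    calc A⁻¹ * U = A⁻¹ * (U * A * S ^ k₅) * (S ^ (-k₅) * A⁻¹) := by group
      _ = A⁻¹ * (A * U) * (S ^ (-k₅) * A⁻¹) := by rw [← h5]
      _ = U * (S ^ (-k₅) * A⁻¹) := by group
      _ = U * (A⁻¹ * S ^ (-k₅)) := by rw [sA']
  have bB'Y : B⁻¹ * Y = Y * (B⁻¹ * S ^ (-k₆)) := by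
    calc B⁻¹ * Y = B⁻¹ * (Y * B * S ^ k₆) * (S ^ (-k₆) * B⁻¹) := by group
      _ = B⁻¹ * (B * Y) * (S ^ (-k₆) * B⁻¹) := by rw [← h6]
      _ = Y * (S ^ (-k₆) * B⁻¹) := by group
      _ = Y * (B⁻¹ * S ^ (-k₆)) := by rw [sB']
  -- t-extended relation rules
  have r2 := rw3 h2
  have r3 := rw3 h3
  have r4 := rw3 h4
  have r5 := rw3 h5
  have r6 := rw3 h6
  have rA'Y := rw2 bA'Y
  have rB'U := rw2 bB'U
  have rA'U := rw2 bA'U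
  have rB'Y := rw2 bB'Y
  have P1 : B * (Y * U * Y) = (Y * U * Y) * A⁻¹ * S ^ (2 * k₆) := by
    rw [two_mul]
    simp only [mul_assoc, r2, r3, r4, r5, r6, rA'Y, rB'U, rA'U, rB'Y, sYt, sUt, sAt, sBt,
      sA't, sB't, sSt, sY, sU, sA, sB, sA', sB', sS0, h2, h3, h4, h5, h6, bA'Y, bB'U, bA'U,
      bB'Y, mul_inv_cancel_left, inv_mul_cancel_left, add_comm, add_left_comm, add_assoc]
  have P2 : B * (U * Y * U) = (U * Y * U) * A⁻¹ * S ^ (k₆ - k₅) := by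
    rw [sub_eq_add_neg]
    simp only [mul_assoc, r2, r3, r4, r5, r6, rA'Y, rB'U, rA'U, rB'Y, sYt, sUt, sAt, sBt,
      sA't, sB't, sSt, sY, sU, sA, sB, sA', sB', sS0, h2, h3, h4, h5, h6, bA'Y, bB'U, bA'U,
      bB'Y, mul_inv_cancel_left, inv_mul_cancel_left, add_comm, add_left_comm, add_assoc]
  have P3 : A * (Y * U * Y) = (Y * U * Y) * B * S ^ (k₂ + k₅ + k₆) := by
    simp only [mul_assoc, r2, r3, r4, r5, r6, rA'Y, rB'U, rA'U, rB'Y, sYt, sUt, sAt, sBt,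
      sA't, sB't, sSt, sY, sU, sA, sB, sA', sB', sS0, h2, h3, h4, h5, h6, bA'Y, bB'U, bA'U,
      bB'Y, mul_inv_cancel_left, inv_mul_cancel_left, add_comm, add_left_comm, add_assoc]
  have P4 : A * (U * Y * U) = (U * Y * U) * B * S ^ (k₂ + 2 * k₅) := by
    rw [two_mul]
    simp only [mul_assoc, r2, r3, r4, r5, r6, rA'Y, rB'U, rA'U, rB'Y, sYt, sUt, sAt, sBt,
      sA't, sB't, sSt, sY, sU, sA, sB, sA', sB', sS0, h2, h3, h4, h5, h6, bA'Y, bB'U, bA'U,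
      bB'Y, mul_inv_cancel_left, inv_mul_cancel_left, add_comm, add_left_comm, add_assoc]
  have key : ∀ a b : ℤ, S ^ a = S ^ b → a = b := by
    intro a b h
    have : S ^ (a - b) = 1 := by rw [zpow_sub, h, mul_inv_cancel]
    have := hSord _ this
    omega
  have eB : S ^ (2 * k₆) = S ^ (k₆ - k₅) := by
    have h' : (Y * U * Y) * A⁻¹ * S ^ (2 * k₆) = (Y * U * Y) * A⁻¹ * S ^ (k₆ - k₅) := by
      rw [← P1, h0, P2, ← h0]
    exact mul_left_cancel h'
  have eA : S ^ (k₂ + k₅ + k₆) = S ^ (k₂ + 2 * k₅) := by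
    have h' : (Y * U * Y) * B * S ^ (k₂ + k₅ + k₆) = (Y * U * Y) * B * S ^ (k₂ + 2 * k₅) := by
      rw [← P3, h0, P4, ← h0]
    exact mul_left_cancel h'
  have e1 := key _ _ eB
  have e2 := key _ _ eA
  refine ⟨P1, P2, by omega, by omega⟩
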